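/- Let R be a right almost perfect ring and let I be a nonzero two-sided ideal of R. Then the following are equivalent: (i) I is a maximal two-sided ideal of R; (ii) I is a prime two-sided ideal of R; (iii) I is a right primitive ideal of R. -/

import Mathlib

universe u

/-- A ring is *right perfect* if it satisfies the descending chain condition
on principal left ideals. -/
def IsRightPerfectRing (R : Type u) [Ring R] : Prop :=
  ∀ f : ℕ → R, (∀ n, Ideal.span {f (n + 1)} ≤ Ideal.span {f n}) →
    ∃ N, ∀ n, N ≤ n → Ideal.span {f n} = Ideal.span {f N}

/-- A ring is *right almost perfect* if `R/I` is right perfect for every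
two-sided ideal `I` with `0 ≠ I ≠ R`. -/
def IsRightAlmostPerfectRing (R : Type u) [Ring R] : Prop :=
  ∀ I : TwoSidedIdeal R, I ≠ ⊥ → I ≠ ⊤ → IsRightPerfectRing I.ringCon.Quotient

/-- A two-sided ideal `P ≠ R` is *prime* if `I * J ⊆ P` implies `I ⊆ P` or `J ⊆ P`
for all two-sided ideals `I`, `J`. -/
def TwoSidedIdeal.IsPrimeTwoSided {R : Type u} [Ring R] (P : TwoSidedIdeal R) : Prop :=
  P ≠ ⊤ ∧ ∀ I J : TwoSidedIdeal R, (∀ a ∈ I, ∀ b ∈ J, a * b ∈ P) → I ≤ P ∨ J ≤ P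

/-- A two-sided ideal `P` is *right primitive* if it is the annihilator of some
simple right `R`-module. -/
def TwoSidedIdeal.IsRightPrimitive {R : Type u} [Ring R] (P : TwoSidedIdeal R) : Prop :=
  ∃ (M : Type u) (_ : AddCommGroup M) (_ : Module Rᵐᵒᵖ M), IsSimpleModule Rᵐᵒᵖ M ∧
    ∀ x : R, x ∈ P ↔ ∀ m : M, MulOpposite.op x • m = 0


open Ideal MulOpposite

def IsPrimeRing (S : Type*) [Ring S] : Prop :=
  ∀ a b : S, a ≠ 0 → b ≠ 0 → ∃ s, a * s * b ≠ 0

section PrincipalLeftIdeals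

variable {S : Type*} [Ring S]

theorem IsRightPerfectRing.wellFounded (h : IsRightPerfectRing S) :
    WellFounded fun a b : S => span {a} < span {b} := by
  refine wellFounded_iff_isEmpty_descending_chain.2 ⟨fun ⟨f, hf⟩ => ?_⟩
  obtain ⟨N, hN⟩ := h f fun n => (hf n).le
  exact (hf N).ne (hN (N + 1) N.le_succ)

theorem IsRightPerfectRing.exists_isAtom_span (h : IsRightPerfectRing S) {a : S} (ha : a ≠ 0) :
    ∃ q ∈ span {a}, IsAtom (span {q}) := by
  obtain ⟨q, ⟨hqa, hq0⟩, hmin⟩ :=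
    h.wellFounded.has_min {q | q ∈ span {a} ∧ q ≠ 0} ⟨a, mem_span_singleton_self a, ha⟩
  refine ⟨q, hqa, span_singleton_eq_bot.not.2 hq0, fun L hLq => ?_⟩
  by_contra hL
  obtain ⟨b, hbL, hb0⟩ := Submodule.exists_mem_ne_zero_of_ne_bot hL
  have hbq : span {b} < span {q} := ((span_singleton_le_iff_mem L).2 hbL).trans_lt hLq
  exact hmin b ⟨(span_singleton_le_iff_mem _).2 hqa (hLq.le hbL), hb0⟩ hbq

theorem ne_zero_of_isAtom_span {q : S} (hq : IsAtom (span {q})) : q ≠ 0 :=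
  span_singleton_eq_bot.not.1 hq.1

theorem mem_span_of_isAtom_span {q b : S} (hq : IsAtom (span {q})) (hb : b ∈ span {q})
    (hb0 : b ≠ 0) : q ∈ span {b} := by
  rw [← span_singleton_le_iff_mem, ← (hq.le_iff_eq (span_singleton_eq_bot.not.2 hb0)).1
    ((span_singleton_le_iff_mem _).2 hb)]

theorem span_one_sub_add_lt {E f : S} (hf : IsIdempotentElem f) (hf0 : f ≠ 0) (hEf : E * f = 0)
    (hfE : f * E = 0) : span {1 - (E + f)} < span {1 - E} := by
  have hfactor : 1 - (E + f) = (1 - f) * (1 - E) := by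
    rw [show (1 - f) * (1 - E) = 1 - (E + f) + f * E by noncomm_ring, hfE, add_zero]
  refine lt_of_le_not_ge ((span_singleton_le_iff_mem _).2 (mem_span_singleton'.2 ⟨_, hfactor.symm⟩))
    fun hle => hf0 ?_
  obtain ⟨y, hy⟩ := mem_span_singleton'.1 ((span_singleton_le_iff_mem _).1 hle)
  -- right multiplication by `f` kills `1 - (E + f)` but fixes `1 - E`
  calc f = (1 - E) * f := by rw [sub_mul, one_mul, hEf, sub_zero]
    _ = y * ((1 - (E + f)) * f) := by rw [← hy, mul_assoc]
    _ = 0 := by rw [sub_mul, one_mul, add_mul, hEf, hf.eq, zero_add, sub_self, mul_zero]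

end PrincipalLeftIdeals

namespace IsPrimeRing

variable {S : Type*} [Ring S]

theorem exists_isIdempotentElem_span_eq (hS : IsPrimeRing S) {q : S} (hq : IsAtom (span {q})) :
    ∃ e, IsIdempotentElem e ∧ span {e} = span {q} := by
  have hq0 := ne_zero_of_isAtom_span hq
  obtain ⟨t, ht⟩ := hS q q hq0 hq0
  set a := t * q
  have hqa : q * a ≠ 0 := by rwa [← mul_assoc]
  have hkill : ∀ x ∈ span {q}, x * a = 0 → x = 0 := by
    intro x hx hxa
    by_contra hx0
    obtain ⟨y, hy⟩ := mem_span_singleton'.1 (mem_span_of_isAtom_span hq hx hx0)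
    exact hqa (by rw [← hy, mul_assoc, hxa, mul_zero])
  obtain ⟨r, hr⟩ := mem_span_singleton'.1
    (mem_span_of_isAtom_span hq (mem_span_singleton'.2 ⟨q * t, mul_assoc q t q⟩) hqa)
  -- `q = r q a` makes `e := t r q` a left identity for `a`
  set e := t * r * q
  have he_mem : e ∈ span {q} := mem_span_singleton'.2 ⟨t * r, rfl⟩
  have he_fix : e * a = a := by
    calc e * a = t * (r * (q * a)) := by simp only [e, mul_assoc]
      _ = a := by rw [hr]
  have he : IsIdempotentElem e := sub_eq_zero.1 <| hkill _ (sub_mem (mul_mem_left _ e he_mem) he_mem)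
    (by rw [sub_mul, mul_assoc, he_fix, he_fix, sub_self])
  have he0 : e ≠ 0 := fun h0 => hqa (by rw [← he_fix, h0, zero_mul, mul_zero])
  exact ⟨e, he, le_antisymm ((span_singleton_le_iff_mem _).2 he_mem)
    ((span_singleton_le_iff_mem _).2 (mem_span_of_isAtom_span hq he_mem he0))⟩

theorem mem_of_isAtom_span (hS : IsPrimeRing S) {K : TwoSidedIdeal S} (hK : K ≠ ⊥) {q : S}
    (hq : IsAtom (span {q})) : q ∈ K := by
  obtain ⟨k, hkK, hk⟩ := SetLike.exists_of_lt (bot_lt_iff_ne_bot.2 hK)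
  obtain ⟨s, hs⟩ := hS k q (by rwa [TwoSidedIdeal.mem_bot] at hk) (ne_zero_of_isAtom_span hq)
  obtain ⟨r, hr⟩ := mem_span_singleton'.1
    (mem_span_of_isAtom_span hq (mem_span_singleton'.2 ⟨k * s, rfl⟩) hs)
  rw [← hr]
  exact K.mul_mem_left _ _ (K.mul_mem_right _ _ (K.mul_mem_right _ _ hkK))

theorem exists_orthogonal_isIdempotentElem_mem (hS : IsPrimeRing S) (hP : IsRightPerfectRing S)
    {K : TwoSidedIdeal S} (hK : K ≠ ⊥) {E : S} (hE : IsIdempotentElem E) (hE1 : E ≠ 1) :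
    ∃ f ∈ K, IsIdempotentElem f ∧ f ≠ 0 ∧ E * f = 0 ∧ f * E = 0 := by
  obtain ⟨q, hqE, hq⟩ := hP.exists_isAtom_span (sub_ne_zero.2 hE1.symm)
  obtain ⟨e, he, hspan⟩ := hS.exists_isIdempotentElem_span_eq hq
  have heK : e ∈ K := hS.mem_of_isAtom_span hK (hspan ▸ hq)
  obtain ⟨y, hy⟩ := mem_span_singleton'.1 ((span_singleton_le_iff_mem _).1 (hspan ▸
    (span_singleton_le_iff_mem _).2 hqE))
  have heE : e * E = 0 := by rw [← hy, mul_assoc, sub_mul, one_mul, hE.eq, sub_self, mul_zero]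
  have he_fix : e * (1 - E) = e := by rw [mul_sub, mul_one, heE, sub_zero]
  refine ⟨(1 - E) * e, K.mul_mem_left _ _ heK, ?_, fun h0 => ?_, ?_, ?_⟩
  · rw [IsIdempotentElem, mul_assoc, ← mul_assoc e, he_fix, he.eq]
  · refine ne_zero_of_isAtom_span (hspan ▸ hq) ?_
    calc e = e * (1 - E) * e := by rw [he_fix, he.eq]
      _ = 0 := by rw [mul_assoc, h0, mul_zero]
  · rw [← mul_assoc, mul_sub, mul_one, hE.eq, sub_self, zero_mul]
  · rw [mul_assoc, heE, mul_zero]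

theorem isSimpleRing [Nontrivial S] (hS : IsPrimeRing S) (hP : IsRightPerfectRing S) :
    IsSimpleRing S := by
  refine .of_eq_bot_or_eq_top fun K => or_iff_not_imp_left.2 fun hK => K.eq_top ?_
  obtain ⟨_, ⟨E, hEK, hE, rfl⟩, hmin⟩ := hP.wellFounded.has_min
    {x | ∃ E ∈ K, IsIdempotentElem E ∧ 1 - E = x} ⟨1, 0, K.zero_mem, .zero, sub_zero 1⟩
  by_contra h1
  obtain ⟨f, hfK, hf, hf0, hEf, hfE⟩ :=
    hS.exists_orthogonal_isIdempotentElem_mem hP hK hE fun h => h1 (h ▸ hEK)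
  exact hmin _ ⟨E + f, K.add_mem hEK hfK, hE.add hf (by rw [hEf, hfE, add_zero]), rfl⟩
    (span_one_sub_add_lt hf hf0 hEf hfE)

end IsPrimeRing

namespace TwoSidedIdeal

section Quotient

variable {R : Type*} [Ring R] {I : TwoSidedIdeal R}

theorem isCoatom_iff_isSimpleRing_quotient : IsCoatom I ↔ IsSimpleRing I.ringCon.Quotient := by
  rw [← orderIsoRingCon.isCoatom_iff, ← Set.isSimpleOrder_Ici_iff_isCoatom,
    RingCon.correspondence.isSimpleOrder_iff, isSimpleRing_iff, orderIsoRingCon.isSimpleOrder_iff]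
  rfl

theorem ringCon_mk'_eq_zero_iff {x : R} : I.ringCon.mk' x = 0 ↔ x ∈ I := by
  rw [← mem_ker, ker_ringCon_mk']

theorem nontrivial_quotient (hI : I ≠ ⊤) : Nontrivial I.ringCon.Quotient :=
  ⟨⟨I.ringCon.mk' 1, 0, fun h => hI (I.eq_top (ringCon_mk'_eq_zero_iff.1 h))⟩⟩

theorem IsPrimeTwoSided.mem_or_mem (hI : I.IsPrimeTwoSided) {a b : R}
    (hab : ∀ s, a * s * b ∈ I) : a ∈ I ∨ b ∈ I := by
  let B : TwoSidedIdeal R := .mk' {y | ∀ s, a * s * y ∈ I}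
    (fun s => by rw [mul_zero]; exact I.zero_mem)
    (fun hx hy s => by rw [mul_add]; exact I.add_mem (hx s) (hy s))
    (fun hx s => by rw [mul_neg]; exact I.neg_mem (hx s))
    (fun {t _} hy s => by rw [← mul_assoc, mul_assoc a]; exact hy (s * t))
    (fun hy s => by rw [← mul_assoc]; exact I.mul_mem_right _ _ (hy s))
  let A : TwoSidedIdeal R := .mk' {x | ∀ y ∈ B, x * y ∈ I}
    (fun y _ => by rw [zero_mul]; exact I.zero_mem)
    (fun hx hx' y hy => by rw [add_mul]; exact I.add_mem (hx y hy) (hx' y hy))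
    (fun hx y hy => by rw [neg_mul]; exact I.neg_mem (hx y hy))
    (fun hx y hy => by rw [mul_assoc]; exact I.mul_mem_left _ _ (hx y hy))
    (fun {_ t} hx y hy => by rw [mul_assoc]; exact hx _ (B.mul_mem_left t y hy))
  have haA : a ∈ A := (mem_mk' ..).2 fun y hy => by simpa using (mem_mk' ..).1 hy 1
  have hbB : b ∈ B := (mem_mk' ..).2 hab
  exact (hI.2 A B fun x hx y hy => (mem_mk' ..).1 hx y hy).imp (· haA) (· hbB)

theorem IsPrimeTwoSided.isPrimeRing_quotient (hI : I.IsPrimeTwoSided) :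
    IsPrimeRing I.ringCon.Quotient := by
  intro a b ha hb
  obtain ⟨a, rfl⟩ := I.ringCon.mk'_surjective a
  obtain ⟨b, rfl⟩ := I.ringCon.mk'_surjective b
  by_contra! hab
  refine (hI.mem_or_mem fun s => ?_).elim (ha <| ringCon_mk'_eq_zero_iff.2 ·)
    (hb <| ringCon_mk'_eq_zero_iff.2 ·)
  rw [← ringCon_mk'_eq_zero_iff, map_mul, map_mul, hab]

end Quotient

section Annihilator

variable {R : Type*} [Ring R]

def rightAnnihilator (M : Type*) [AddCommGroup M] [Module Rᵐᵒᵖ M] : TwoSidedIdeal R :=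
  (ker (Module.toAddMonoidEnd Rᵐᵒᵖ M)).unop

theorem mem_rightAnnihilator {M : Type*} [AddCommGroup M] [Module Rᵐᵒᵖ M] {x : R} :
    x ∈ rightAnnihilator M ↔ ∀ m : M, MulOpposite.op x • m = 0 := by
  rw [rightAnnihilator, mem_unop_iff, mem_ker]
  exact ⟨fun h m => DFunLike.congr_fun h m, fun h => AddMonoidHom.ext h⟩

end Annihilator

variable {R : Type u} [Ring R] {I : TwoSidedIdeal R}

theorem IsPrimeTwoSided.isCoatom (h : IsRightAlmostPerfectRing R) (hI : I ≠ ⊥)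
    (hP : I.IsPrimeTwoSided) : IsCoatom I :=
  have := nontrivial_quotient hP.1
  isCoatom_iff_isSimpleRing_quotient.2 (hP.isPrimeRing_quotient.isSimpleRing (h I hI hP.1))

theorem IsRightPrimitive.isPrimeTwoSided (hI : I.IsRightPrimitive) : I.IsPrimeTwoSided := by
  obtain ⟨M, _, _, hM, hIM⟩ := hI
  have := IsSimpleModule.nontrivial Rᵐᵒᵖ M
  refine ⟨fun htop => ?_, fun A B hAB => or_iff_not_imp_left.2 fun hA b hb => ?_⟩
  · obtain ⟨m, hm⟩ := exists_ne (0 : M)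
    exact hm (by simpa using (hIM 1).1 (htop ▸ mem_top _) m)
  obtain ⟨a, haA, haI⟩ := SetLike.not_le_iff_exists.1 hA
  obtain ⟨m, hm⟩ : ∃ m : M, MulOpposite.op a • m ≠ 0 := by simpa [hIM] using haI
  refine (hIM b).2 fun m' => ?_
  obtain ⟨r, rfl⟩ := Submodule.mem_span_singleton.1
    ((IsSimpleModule.span_singleton_eq_top Rᵐᵒᵖ hm).symm ▸ Submodule.mem_top : m' ∈ _)
  have hm0 := (hIM _).1 (hAB _ (A.mul_mem_right _ r.unop haA) b hb) m
  rwa [op_mul, op_mul, op_unop, mul_smul, mul_smul] at hm0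

theorem _root_.IsCoatom.isRightPrimitive (hI : IsCoatom I) : I.IsRightPrimitive := by
  obtain ⟨𝔪, h𝔪, hI𝔪⟩ := Ideal.exists_le_maximal (asIdealOpposite I) fun h =>
    hI.1 (I.eq_top (mem_asIdealOpposite.1 (h ▸ Submodule.mem_top : (1 : Rᵐᵒᵖ) ∈ _)))
  have hle : I ≤ rightAnnihilator (Rᵐᵒᵖ ⧸ 𝔪) := fun x hx => mem_rightAnnihilator.2 fun m => by
    obtain ⟨r, rfl⟩ := Submodule.Quotient.mk_surjective 𝔪 m
    rw [← Submodule.Quotient.mk_smul, Submodule.Quotient.mk_eq_zero]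
    exact hI𝔪 (mem_asIdealOpposite.2 (I.mul_mem_left r.unop x hx))
  have hne : rightAnnihilator (Rᵐᵒᵖ ⧸ 𝔪) ≠ ⊤ := fun h => h𝔪.ne_top <| (eq_top_iff_one 𝔪).2 <| by
    simpa [Submodule.Quotient.mk_eq_zero] using
      mem_rightAnnihilator.1 (h ▸ mem_top _ : (1 : R) ∈ _) (Submodule.Quotient.mk 1)
  have hann := (hI.le_iff.1 hle).resolve_left hne
  exact ⟨Rᵐᵒᵖ ⧸ 𝔪, _, _, isSimpleModule_iff_isCoatom.2 (Ideal.isMaximal_def.1 h𝔪),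
    fun x => by rw [← mem_rightAnnihilator, hann]⟩

end TwoSidedIdeal

/-- In a right almost perfect ring, a nonzero two-sided ideal is maximal iff it is prime
iff it is right primitive. -/
theorem stmt2 {R : Type u} [Ring R] (h : IsRightAlmostPerfectRing R)
    (I : TwoSidedIdeal R) (hI : I ≠ ⊥) :
    (IsCoatom I ↔ I.IsPrimeTwoSided) ∧ (I.IsPrimeTwoSided ↔ I.IsRightPrimitive) :=
  ⟨⟨fun hc => hc.isRightPrimitive.isPrimeTwoSided, (·.isCoatom h hI)⟩,
    ⟨fun hP => (hP.isCoatom h hI).isRightPrimitive, (·.isPrimeTwoSided)⟩⟩
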